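/- arXiv:1910.10297 — 3 statements merged into one kernel-verified Lean document; each statement's English description precedes it below -/
import Mathlib

section
/- Let σ ⊆ ℝ^d be a rational polyhedral cone generated by finitely many lattice points in ℤ^d. Then its dual cone σ^∨ = {m ∈ ℝ^d : ⟨m, v⟩ ≥ 0 for all v ∈ σ} is also a rational polyhedral cone, i.e., it is generated by finitely many lattice points of ℤ^d. -/
open Set Pointwise

noncomputable section

/-- The standard dot product pairing on `Fin d → ℝ`. -/
def dotR {d : ℕ} (m v : Fin d → ℝ) : ℝ := ∑ i, m i * v i

/-- The cast of an integer lattice vector to a real vector. -/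
def zCast {d : ℕ} (u : Fin d → ℤ) : Fin d → ℝ := fun i => (u i : ℝ)

/-- The convex cone generated by finitely many vectors `v 0, …, v (s-1)`:
all nonnegative real combinations. -/
def coneOf {d s : ℕ} (v : Fin s → Fin d → ℝ) : Set (Fin d → ℝ) :=
  {x | ∃ c : Fin s → ℝ, (∀ i, 0 ≤ c i) ∧ x = ∑ i, c i • v i}

/-- The dual cone of a set `σ`: all `m` pairing nonnegatively with every element of `σ`. -/
def dualCone {d : ℕ} (σ : Set (Fin d → ℝ)) : Set (Fin d → ℝ) :=
  {m | ∀ v ∈ σ, 0 ≤ dotR m v}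

/-!
Fourier–Motzkin elimination: for finite `s`, the cone `hull s ∩ {φ ≥ 0}` is generated by
the points `g ∈ s` with `φ g ≥ 0` together with the combinations `φ g • k - φ k • g` for
`φ g ≥ 0 > φ k`. Indeed, writing `x = p + n` with `p`, `n` in the cones spanned by the
generators where `φ ≥ 0`, resp. `φ < 0`, one has `φ p • x = φ x • p + (φ p • n - φ n • p)`,
and the last term is bilinear in `(p, n)`, hence a nonnegative combination of the new
generators. If `s` consists of lattice points and `φ` takes integer values on the
lattice, the new generators are again lattice points. Starting from `±eᵢ`, which generate
all of `ℝ^d`, and cutting by the halfspaces `⟨·, vᵢ⟩ ≥ 0` one at a time yields finitely many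
lattice points that generate `σ^∨`.
-/

namespace PointedCone

variable {𝕜 E : Type*} [Field 𝕜] [LinearOrder 𝕜] [AddCommGroup E] [Module 𝕜 E]

def fourierMotzkin (φ : E →ₗ[𝕜] 𝕜) (s : Set E) : Set E :=
  {g ∈ s | 0 ≤ φ g} ∪
    image2 (fun g k => φ g • k - φ k • g) {g ∈ s | 0 ≤ φ g} {k ∈ s | φ k < 0}

variable {φ : E →ₗ[𝕜] 𝕜} {s : Set E}

theorem _root_.Set.Finite.fourierMotzkin (hs : s.Finite) : (fourierMotzkin φ s).Finite :=
  (hs.sep _).union ((hs.sep _).image2 _ (hs.sep _))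

theorem fourierMotzkin_subset_addSubgroup {Λ : AddSubgroup E}
    (hφ : ∀ x ∈ Λ, ∃ n : ℤ, φ x = n) (hs : s ⊆ Λ) : fourierMotzkin φ s ⊆ Λ := by
  rintro _ (⟨hg, -⟩ | ⟨g, ⟨hg, -⟩, k, ⟨hk, -⟩, rfl⟩)
  · exact hs hg
  · obtain ⟨m, hm⟩ := hφ g (hs hg)
    obtain ⟨n, hn⟩ := hφ k (hs hk)
    simp only [hm, hn, Int.cast_smul_eq_zsmul]
    exact sub_mem (zsmul_mem (hs hk) m) (zsmul_mem (hs hg) n)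

variable [IsStrictOrderedRing 𝕜]

theorem hull_fourierMotzkin_le :
    hull 𝕜 (fourierMotzkin φ s) ≤ hull 𝕜 s ⊓ (positive 𝕜 𝕜).comap φ := by
  refine Submodule.span_le.2 ?_
  rintro _ (⟨hg, hφg⟩ | ⟨g, ⟨hg, hφg⟩, k, ⟨hk, hφk⟩, rfl⟩)
  · exact ⟨subset_hull hg, hφg⟩
  · refine ⟨?_, ?_⟩
    · show φ g • k - φ k • g ∈ hull 𝕜 s
      rw [sub_eq_add_neg, ← neg_smul]
      exact add_mem (smul_mem _ hφg (subset_hull hk))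
        (smul_mem _ (neg_nonneg.2 hφk.le) (subset_hull hg))
    · simp [mul_comm]

theorem sub_mem_hull_fourierMotzkin {p n : E} (hp : p ∈ hull 𝕜 {g ∈ s | 0 ≤ φ g})
    (hn : n ∈ hull 𝕜 {k ∈ s | φ k < 0}) :
    φ p • n - φ n • p ∈ hull 𝕜 (fourierMotzkin φ s) := by
  have hgen : ∀ k ∈ {k ∈ s | φ k < 0},
      φ p • k - φ k • p ∈ hull 𝕜 (fourierMotzkin φ s) := by
    intro k hk
    have : hull 𝕜 {g ∈ s | 0 ≤ φ g} ≤
        (hull 𝕜 (fourierMotzkin φ s)).comap (φ.smulRight k - φ k • LinearMap.id) :=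
      Submodule.span_le.2 fun g hg => subset_hull (Or.inr (mem_image2_of_mem hg hk))
    simpa using this hp
  have : hull 𝕜 {k ∈ s | φ k < 0} ≤
      (hull 𝕜 (fourierMotzkin φ s)).comap (φ p • LinearMap.id - φ.smulRight p) :=
    Submodule.span_le.2 fun k hk => by simpa using hgen k hk
  simpa using this hn

theorem eq_zero_of_mem_hull_of_nonneg {t : Set E} (ht : ∀ k ∈ t, φ k < 0) {n : E}
    (hn : n ∈ hull 𝕜 t) (hφn : 0 ≤ φ n) : n = 0 := by
  suffices φ n ≤ 0 ∧ (0 ≤ φ n → n = 0) from this.2 hφn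
  clear hφn
  induction hn using Submodule.span_induction with
  | mem k hk => exact ⟨(ht k hk).le, fun h => absurd h (ht k hk).not_ge⟩
  | zero => simp
  | add x y _ _ hx hy =>
    refine ⟨by simpa using add_nonpos hx.1 hy.1, fun h => ?_⟩
    rw [map_add] at h
    rw [hx.2 (by linarith [hy.1]), hy.2 (by linarith [hx.1]), add_zero]
  | smul c x _ hx =>
    rw [← Nonneg.coe_smul, map_smul, smul_eq_mul]
    refine ⟨mul_nonpos_of_nonneg_of_nonpos c.2 hx.1, fun h => ?_⟩
    rcases c.2.eq_or_lt with hc | hc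
    · rw [← hc, zero_smul]
    · rw [hx.2 (nonneg_of_mul_nonneg_right h hc), smul_zero]

theorem hull_fourierMotzkin :
    hull 𝕜 (fourierMotzkin φ s) = hull 𝕜 s ⊓ (positive 𝕜 𝕜).comap φ := by
  refine le_antisymm hull_fourierMotzkin_le ?_
  rintro x ⟨hx : x ∈ hull 𝕜 s, hφx : 0 ≤ φ x⟩
  have hs : s = {g ∈ s | 0 ≤ φ g} ∪ {k ∈ s | φ k < 0} := by
    ext g
    simp only [mem_union, mem_sep_iff, ← and_or_left, le_or_gt, and_true]
  rw [hs, hull, Submodule.span_union, Submodule.mem_sup] at hx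
  obtain ⟨p, hp, n, hn, rfl⟩ := hx
  have hP : hull 𝕜 {g ∈ s | 0 ≤ φ g} ≤ hull 𝕜 (fourierMotzkin φ s) :=
    Submodule.span_mono subset_union_left
  have hφp : 0 ≤ φ p := (hull_fourierMotzkin_le (hP hp)).2
  rw [map_add] at hφx
  rcases hφp.eq_or_lt with hφp | hφp
  · rw [eq_zero_of_mem_hull_of_nonneg (fun k hk => hk.2) hn (by linarith), add_zero]
    exact hP hp
  · rw [← smul_mem_iff _ hφp]
    have : φ p • (p + n) = (φ p + φ n) • p + (φ p • n - φ n • p) := by module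
    rw [this]
    exact add_mem (smul_mem _ hφx (hP hp)) (sub_mem_hull_fourierMotzkin hp hn)

theorem exists_finite_hull_eq_inf_iInf_comap (Λ : AddSubgroup E) {A : Set (E →ₗ[𝕜] 𝕜)}
    (hA : A.Finite) (hAΛ : ∀ φ ∈ A, ∀ x ∈ Λ, ∃ n : ℤ, φ x = n) (hs : s.Finite) (hsΛ : s ⊆ Λ) :
    ∃ t : Set E, t.Finite ∧ t ⊆ Λ ∧
      hull 𝕜 t = hull 𝕜 s ⊓ ⨅ φ ∈ A, (positive 𝕜 𝕜).comap φ := by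
  induction A, hA using Set.Finite.induction_on generalizing s with
  | empty => exact ⟨s, hs, hsΛ, by simp⟩
  | @insert φ A _ _ ih =>
    obtain ⟨t, ht, htΛ, hst⟩ := ih (fun ψ hψ => hAΛ ψ (mem_insert_of_mem _ hψ))
      hs.fourierMotzkin (fourierMotzkin_subset_addSubgroup (hAΛ φ (mem_insert _ _)) hsΛ)
    refine ⟨t, ht, htΛ, ?_⟩
    rw [hst, hull_fourierMotzkin, iInf_insert, inf_assoc]

theorem _root_.Module.Basis.hull_range_union_neg_eq_top {ι : Type*} [Fintype ι]
    (b : Module.Basis ι 𝕜 E) : hull 𝕜 (range b ∪ -range b) = ⊤ := by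
  refine eq_top_iff.2 fun x _ => ?_
  rw [← b.sum_repr x]
  refine sum_mem fun i _ => ?_
  rcases le_or_gt 0 (b.repr x i) with h | h
  · exact smul_mem _ h (subset_hull (Or.inl (mem_range_self i)))
  · rw [← neg_smul_neg]
    exact smul_mem _ (neg_nonneg.2 h.le) (subset_hull (Or.inr (by simp)))

end PointedCone

open PointedCone

section Lattice

variable {d : ℕ}

def integralVectors (d : ℕ) : AddSubgroup (Fin d → ℝ) :=
  (AddMonoidHom.compLeft (Int.castAddHom ℝ) (Fin d)).range

theorem range_basisFun_union_neg_subset_integralVectors :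
    range (Pi.basisFun ℝ (Fin d)) ∪ -range (Pi.basisFun ℝ (Fin d)) ⊆ integralVectors d := by
  have h : range (Pi.basisFun ℝ (Fin d)) ⊆ integralVectors d := by
    rintro _ ⟨i, rfl⟩
    exact ⟨Pi.single i 1, by ext; simp [Pi.single_apply]⟩
  exact union_subset h ((neg_subset_neg.2 h).trans neg_coe_set.subset)

theorem exists_fin_range_zCast_eq {t : Set (Fin d → ℝ)} (ht : t.Finite)
    (htΛ : t ⊆ integralVectors d) :
    ∃ (n : ℕ) (u : Fin n → Fin d → ℤ), range (fun j => zCast (u j)) = t := by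
  have hinj : Function.Injective (zCast (d := d)) := fun u w h =>
    funext fun i => Int.cast_injective (congrFun h i)
  obtain ⟨n, u, hu⟩ := (ht.preimage hinj.injOn).fin_embedding
  exact ⟨n, u, (range_comp zCast u).trans (hu ▸ image_preimage_eq_of_subset htΛ)⟩

theorem exists_int_dotProductBilin_zCast (u : Fin d → ℤ) :
    ∀ x ∈ integralVectors d, ∃ n : ℤ, dotProductBilin ℝ ℝ (zCast u) x = n := by
  rintro _ ⟨w, rfl⟩
  exact ⟨u ⬝ᵥ w, by simp [dotProduct, zCast]⟩

theorem coneOf_eq_hull {s : ℕ} (w : Fin s → Fin d → ℝ) : coneOf w = hull ℝ (range w) := by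
  ext x
  simp only [coneOf, mem_ofPred_eq, SetLike.mem_coe, Submodule.mem_span_range_iff_exists_fun]
  constructor
  · rintro ⟨c, hc, rfl⟩
    exact ⟨fun i => ⟨c i, hc i⟩, rfl⟩
  · rintro ⟨c, rfl⟩
    exact ⟨fun i => c i, fun i => (c i).2, rfl⟩

theorem dualCone_coneOf {s : ℕ} (w : Fin s → Fin d → ℝ) :
    dualCone (coneOf w) = ⨅ i, (positive ℝ ℝ).comap (dotProductBilin ℝ ℝ (w i)) := by
  ext m
  simp only [dualCone, coneOf_eq_hull, mem_ofPred_eq, SetLike.mem_coe, Submodule.mem_iInf,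
    mem_comap, mem_positive, dotProductBilin_apply_apply, dotProduct_comm (w _)]
  refine ⟨fun h i => h _ (subset_hull (mem_range_self i)), fun h => ?_⟩
  have hle : hull ℝ (range w) ≤ (positive ℝ ℝ).comap (dotProductBilin ℝ ℝ m) :=
    Submodule.span_le.2 (by rintro _ ⟨i, rfl⟩; exact h i)
  exact fun v hv => hle hv

end Lattice

/-- the dual of a rational polyhedral cone (generated by finitely many
lattice points) is again generated by finitely many lattice points. -/
theorem dualCone_of_rational_polyhedral_is_rational_polyhedral
    {d s : ℕ} (v : Fin s → Fin d → ℤ) :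
    ∃ (s' : ℕ) (u : Fin s' → Fin d → ℤ),
      dualCone (coneOf fun i => zCast (v i)) = coneOf fun j => zCast (u j) := by
  let e := Pi.basisFun ℝ (Fin d)
  obtain ⟨t, ht, htΛ, hhull⟩ := exists_finite_hull_eq_inf_iInf_comap (integralVectors d)
    (finite_range fun i => dotProductBilin ℝ ℝ (zCast (v i)))
    (forall_mem_range.2 fun i => exists_int_dotProductBilin_zCast (v i))
    ((finite_range e).union (finite_range e).neg) range_basisFun_union_neg_subset_integralVectors
  obtain ⟨n, u, rfl⟩ := exists_fin_range_zCast_eq ht htΛ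
  refine ⟨n, u, ?_⟩
  rw [dualCone_coneOf, coneOf_eq_hull, hhull, e.hull_range_union_neg_eq_top,
    top_inf_eq, iInf_range]
end
end

section
/- Let σ^∨ ⊆ ℝ^d be a full-dimensional rational polyhedral cone, A ⊆ σ^∨ ∩ ℤ^d finite and nonempty with Newton polyhedron P = conv(A) + σ^∨, and let t > 0 be rational. Then Int(tP) = ⋃_{n ≥ 1, f ∈ (1/n)(A + ⋯ + A) (⌈tn⌉ summands)} (f + Int(σ^∨)). -/
open Set Pointwise

noncomputable section

section AuxCone

variable {d s : ℕ} {v : Fin s → Fin d → ℝ}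

lemma coneOf_zero_mem : (0 : Fin d → ℝ) ∈ coneOf v :=
  ⟨0, fun _ => le_refl 0, by simp⟩

lemma coneOf_add_mem {x y : Fin d → ℝ} (hx : x ∈ coneOf v) (hy : y ∈ coneOf v) :
    x + y ∈ coneOf v := by
  obtain ⟨c, hc, rfl⟩ := hx
  obtain ⟨c', hc', rfl⟩ := hy
  exact ⟨c + c', fun i => add_nonneg (hc i) (hc' i), by
    simp [add_smul, Finset.sum_add_distrib]⟩

lemma coneOf_smul_mem {r : ℝ} (hr : 0 ≤ r) {x : Fin d → ℝ} (hx : x ∈ coneOf v) :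
    r • x ∈ coneOf v := by
  obtain ⟨c, hc, rfl⟩ := hx
  exact ⟨fun i => r * c i, fun i => mul_nonneg hr (hc i), by
    simp [Finset.smul_sum, smul_smul]⟩

lemma coneOf_convex : Convex ℝ (coneOf v) := fun _ hx _ hy _ _ ha hb _ =>
  coneOf_add_mem (coneOf_smul_mem ha hx) (coneOf_smul_mem hb hy)

lemma add_mem_interior_of {Cs : Set (Fin d → ℝ)}
    (hadd : ∀ x ∈ Cs, ∀ y ∈ Cs, x + y ∈ Cs) {c w : Fin d → ℝ}
    (hc : c ∈ Cs) (hw : w ∈ interior Cs) : c + w ∈ interior Cs := by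
  have h : (c + ·) '' interior Cs ⊆ interior Cs :=
    interior_maximal (by rintro _ ⟨y, hy, rfl⟩; exact hadd c hc y (interior_subset hy))
      ((isOpenMap_add_left c) _ isOpen_interior)
  exact h ⟨w, hw, rfl⟩

lemma smul_mem_interior_of {Cs : Set (Fin d → ℝ)} {r : ℝ} (hr : 0 < r)
    (hsmul : ∀ x ∈ Cs, r • x ∈ Cs) {w : Fin d → ℝ}
    (hw : w ∈ interior Cs) : r • w ∈ interior Cs := by
  have h : (r • ·) '' interior Cs ⊆ interior Cs :=
    interior_maximal (by rintro _ ⟨y, hy, rfl⟩; exact hsmul y (interior_subset hy))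
      ((isOpenMap_smul₀ (ne_of_gt hr)) _ isOpen_interior)
  exact h ⟨w, hw, rfl⟩

lemma interior_coneOf_nonempty (hfd : Submodule.span ℝ (coneOf v) = ⊤) :
    (interior (coneOf v)).Nonempty := by
  rw [(coneOf_convex).interior_nonempty_iff_affineSpan_eq_top]
  have h0 : (0 : Fin d → ℝ) ∈ coneOf v := coneOf_zero_mem
  have h : (affineSpan ℝ (coneOf v) : Set (Fin d → ℝ)) = univ := by
    rw [← Set.insert_eq_of_mem h0, affineSpan_insert_zero, hfd]
    rfl
  rwa [AffineSubspace.coe_eq_univ_iff] at h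

end AuxCone

/-- Rational approximation of a convex weight system. -/
lemma exists_nat_approx {ι : Type*} (sF : Finset ι) (w : ι → ℝ)
    (h0 : ∀ i ∈ sF, 0 ≤ w i) (h1 : ∑ i ∈ sF, w i = 1) {ε : ℝ} (hε : 0 < ε) :
    ∃ N : ℕ, 0 < N ∧ ∃ r : ι → ℕ, ∑ i ∈ sF, r i = N ∧
      ∀ i ∈ sF, |(r i : ℝ) / N - w i| < ε := by
  classical
  set k : ℕ := sF.card with hk
  obtain ⟨M, hM⟩ := exists_nat_gt ((k + 1 : ℝ) / ε)
  have hMpos : (0 : ℝ) < M := lt_of_le_of_lt (le_of_lt (div_pos (by positivity) hε)) hM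
  have hkeM : (k + 1 : ℝ) < ε * M := by
    rw [div_lt_iff₀ hε] at hM; linarith [hM]
  set r : ι → ℕ := fun i => ⌈w i * M⌉₊ with hr
  set N : ℕ := ∑ i ∈ sF, r i with hN
  have hle : ∀ i ∈ sF, w i * M ≤ (r i : ℝ) := fun i _ => Nat.le_ceil _
  have hlt : ∀ i ∈ sF, (r i : ℝ) < w i * M + 1 := fun i hi =>
    Nat.ceil_lt_add_one (mul_nonneg (h0 i hi) hMpos.le)
  have hNge : (M : ℝ) ≤ (N : ℝ) := by
    have : ∑ i ∈ sF, w i * M ≤ ∑ i ∈ sF, (r i : ℝ) := Finset.sum_le_sum hle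
    rw [← Finset.sum_mul, h1, one_mul] at this
    simpa [hN] using this
  have hNlt : (N : ℝ) < M + k := by
    have : ∑ i ∈ sF, (r i : ℝ) < ∑ i ∈ sF, (w i * M + 1) := by
      apply Finset.sum_lt_sum_of_nonempty ?_ hlt
      rcases Finset.eq_empty_or_nonempty sF with h | h
      · exfalso; rw [h] at h1; simp at h1
      · exact h
    rw [Finset.sum_add_distrib, ← Finset.sum_mul, h1, one_mul, Finset.sum_const,
      nsmul_eq_mul, mul_one] at this
    simpa [hN] using this
  have hNpos : (0 : ℝ) < N := lt_of_lt_of_le hMpos hNge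
  refine ⟨N, by exact_mod_cast hNpos, r, rfl, fun i hi => ?_⟩
  have hwle : w i ≤ 1 := by
    rw [← h1]
    exact Finset.single_le_sum h0 hi
  have key : |(r i : ℝ) - w i * N| < ε * N := by
    rw [abs_lt]
    constructor
    · nlinarith [hle i hi, h0 i hi, hwle, hε]
    · nlinarith [hlt i hi, h0 i hi, hwle, hε]
  have heq : (r i : ℝ) / N - w i = ((r i : ℝ) - w i * N) / N := by
    field_simp
  rw [heq, abs_div, abs_of_pos hNpos, div_lt_iff₀ hNpos]
  exact key

/-- Realizing a finitely supported multiplicity function as a tuple. -/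
lemma exists_rep {ι : Type*} {α : Type*} [AddCommMonoid α]
    (sF : Finset ι) (c : ι → ℕ) (b : ι → α) :
    ∃ a : Fin (∑ i ∈ sF, c i) → α, (∀ j, ∃ i ∈ sF, a j = b i) ∧
      ∑ j, a j = ∑ i ∈ sF, c i • b i := by
  classical
  set M : Multiset α := ∑ i ∈ sF, Multiset.replicate (c i) (b i) with hM
  have hcard : Multiset.card M = ∑ i ∈ sF, c i := by
    rw [hM, Multiset.card_sum]
    simp
  have hsum : M.sum = ∑ i ∈ sF, c i • b i := by
    rw [hM, ← Multiset.coe_sumAddMonoidHom,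
      map_sum Multiset.sumAddMonoidHom (fun i => Multiset.replicate (c i) (b i)) sF]
    simp [Multiset.sum_replicate]
  have hlen : M.toList.length = ∑ i ∈ sF, c i := by
    rw [Multiset.length_toList, hcard]
  refine ⟨fun j => M.toList.get (Fin.cast hlen.symm j), fun j => ?_, ?_⟩
  · have hmem : M.toList.get (Fin.cast hlen.symm j) ∈ M := by
      rw [← Multiset.mem_toList]
      exact List.get_mem M.toList _
    obtain ⟨i, hi, hmem⟩ := Multiset.mem_sum.mp hmem
    exact ⟨i, hi, Multiset.eq_of_mem_replicate hmem⟩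
  · rw [← hsum, ← Multiset.sum_toList]
    rw [← Fin.sum_univ_getElem (l := M.toList)]
    exact Fintype.sum_equiv (finCongr hlen.symm) _ _ (fun j => rfl)

/-- `zCast` as an additive monoid homomorphism. -/
def zCastHom (d : ℕ) : (Fin d → ℤ) →+ (Fin d → ℝ) where
  toFun := zCast
  map_zero' := by funext i; simp [zCast]
  map_add' := fun x y => by funext i; simp [zCast]

/-- the interior of the dilate `t·P` of the Newton polyhedron
`P = conv(A) + C` is the union, over positive integers `n` and products
`f = (a₁ + ⋯ + a_{⌈tn⌉})/n` with `aⱼ ∈ A`, of the translates `f + Int C`. -/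
theorem interior_dilated_newton_polyhedron
    {d s : ℕ} (g : Fin s → Fin d → ℤ)
    (C : Set (Fin d → ℝ)) (hC : C = coneOf fun i => zCast (g i))
    (hfd : Submodule.span ℝ C = ⊤)
    (A : Finset (Fin d → ℤ)) (hA : A.Nonempty) (hAC : ∀ a ∈ A, zCast a ∈ C)
    (P : Set (Fin d → ℝ)) (hP : P = convexHull ℝ (zCast '' ↑A) + C)
    (t : ℚ) (ht : 0 < t) :
    interior ((t : ℝ) • P) =
      {u : Fin d → ℝ | ∃ n : ℕ, 0 < n ∧
        ∃ a : Fin ⌈t * (n : ℚ)⌉₊ → Fin d → ℤ, (∀ j, a j ∈ A) ∧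
          u - (n : ℝ)⁻¹ • (∑ j, zCast (a j)) ∈ interior C} := by
  classical
  have htR : (0 : ℝ) < (t : ℝ) := by exact_mod_cast ht
  have hC0 : (0 : Fin d → ℝ) ∈ C := by rw [hC]; exact coneOf_zero_mem
  have hCadd : ∀ x ∈ C, ∀ y ∈ C, x + y ∈ C := by
    rw [hC]; intro x hx y hy; exact coneOf_add_mem hx hy
  have hCsmul : ∀ (r : ℝ), 0 ≤ r → ∀ x ∈ C, r • x ∈ C := by
    rw [hC]; intro r hr x hx; exact coneOf_smul_mem hr hx
  have hCconv : Convex ℝ C := by rw [hC]; exact coneOf_convex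
  have hconvC : convexHull ℝ (zCast '' ↑A) ⊆ C :=
    convexHull_min (by rintro _ ⟨x, hx, rfl⟩; exact hAC x hx) hCconv
  ext u
  simp only [Set.mem_setOf_eq]
  constructor
  · -- forward direction
    intro hu
    have hv' : (interior C).Nonempty := by
      rw [hC]; exact interior_coneOf_nonempty (by rw [← hC]; exact hfd)
    obtain ⟨v, hv⟩ := hv'
    obtain ⟨ε, hεpos, hball⟩ := Metric.isOpen_iff.mp isOpen_interior u hu
    set δ : ℝ := ε / (2 * (‖v‖ + 1)) with hδdef
    have hδpos : 0 < δ := by positivity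
    have hmem : u - δ • v ∈ (t : ℝ) • P := by
      refine interior_subset (hball ?_)
      rw [Metric.mem_ball, dist_eq_norm]
      have h1 : u - δ • v - u = -(δ • v) := by abel
      rw [h1, norm_neg, norm_smul, Real.norm_eq_abs, abs_of_pos hδpos, hδdef,
        div_mul_eq_mul_div, div_lt_iff₀ (by positivity)]
      nlinarith [norm_nonneg v, hεpos]
    obtain ⟨pt, hpt, hpu⟩ := hmem
    rw [hP] at hpt
    obtain ⟨x, hx, cc, hcc, hxc⟩ := Set.mem_add.mp hpt
    rw [convexHull_eq] at hx
    obtain ⟨ι, sF, wgt, z, hw0, hw1, hzA, hcm⟩ := hx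
    have hxeq : x = ∑ i ∈ sF, wgt i • z i := by
      rw [← hcm, Finset.centerMass_eq_of_sum_1 _ _ hw1]
    have hz' : ∀ i ∈ sF, ∃ bi, bi ∈ A ∧ zCast bi = z i := by
      intro i hi
      obtain ⟨bi, hbi, hbz⟩ := hzA i hi
      exact ⟨bi, hbi, hbz⟩
    choose! b hbA hbz using hz'
    set w₀ : Fin d → ℝ := (t : ℝ) • cc + δ • v with hw₀def
    have hw₀ : w₀ ∈ interior C := by
      exact add_mem_interior_of hCadd (hCsmul _ htR.le _ hcc)
        (smul_mem_interior_of hδpos (fun x hx => hCsmul _ hδpos.le x hx) hv)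
    obtain ⟨ε', hε'pos, hball'⟩ := Metric.isOpen_iff.mp isOpen_interior w₀ hw₀
    set R : ℝ := (∑ i ∈ sF, ‖z i‖) + 1 with hRdef
    have hRpos : 0 < R := by
      have : (0:ℝ) ≤ ∑ i ∈ sF, ‖z i‖ := Finset.sum_nonneg fun i _ => norm_nonneg _
      linarith
    set εw : ℝ := ε' / ((t : ℝ) * R) with hεwdef
    have hεwpos : 0 < εw := by positivity
    obtain ⟨N, hNpos, r, hrsum, hrapp⟩ := exists_nat_approx sF wgt hw0 hw1 hεwpos
    set p : ℕ := t.num.toNat with hpdef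
    have hnumpos : 0 < t.num := Rat.num_pos.mpr ht
    have hpnum : ((p : ℤ)) = t.num := by rw [hpdef]; exact Int.toNat_of_nonneg hnumpos.le
    have hppos : 0 < p := by rw [hpdef]; omega
    set q : ℕ := t.den with hqdef
    have hqpos : 0 < q := t.pos
    have hNR : (0:ℝ) < N := by exact_mod_cast hNpos
    have hqR : (0:ℝ) < q := by exact_mod_cast hqpos
    refine ⟨q * N, Nat.mul_pos hqpos hNpos, ?_⟩
    have hkey : t * ((q * N : ℕ) : ℚ) = ((p * N : ℕ) : ℚ) := by
      push_cast
      rw [← mul_assoc, hqdef, Rat.mul_den_eq_num, ← hpnum]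
      push_cast
      ring
    have hmeq : ⌈t * ((q * N : ℕ) : ℚ)⌉₊ = p * N := by
      rw [hkey, Nat.ceil_natCast]
    have hcount : ∑ i ∈ sF, p * r i = p * N := by rw [← Finset.mul_sum, hrsum]
    obtain ⟨a', ha'mem, ha'sum⟩ := exists_rep sF (fun i => p * r i) b
    have hmm : ⌈t * ((q * N : ℕ) : ℚ)⌉₊ = ∑ i ∈ sF, p * r i := by rw [hmeq, hcount]
    refine ⟨fun j => a' (Fin.cast hmm j), fun j => ?_, ?_⟩
    · obtain ⟨i, hi, hai⟩ := ha'mem (Fin.cast hmm j)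
      show a' (Fin.cast hmm j) ∈ A
      rw [hai]; exact hbA i hi
    · -- main analytic computation
      have hS1 : ∑ j : Fin ⌈t * ((q * N : ℕ) : ℚ)⌉₊, zCast (a' (Fin.cast hmm j))
          = ∑ j : Fin (∑ i ∈ sF, p * r i), zCast (a' j) :=
        Fintype.sum_equiv (finCongr hmm) _ _ (fun j => rfl)
      have hS2 : ∑ j : Fin (∑ i ∈ sF, p * r i), zCast (a' j)
          = ∑ i ∈ sF, ((p * r i : ℕ) : ℝ) • z i := by
        have h1 : ∑ j : Fin (∑ i ∈ sF, p * r i), zCastHom d (a' j)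
            = zCastHom d (∑ j, a' j) := (map_sum (zCastHom d) a' Finset.univ).symm
        have h2 : zCastHom d (∑ i ∈ sF, (p * r i) • b i)
            = ∑ i ∈ sF, (p * r i) • zCastHom d (b i) := by
          rw [map_sum]
          exact Finset.sum_congr rfl fun i _ => map_nsmul (zCastHom d) _ _
        calc ∑ j : Fin (∑ i ∈ sF, p * r i), zCast (a' j)
            = zCastHom d (∑ j, a' j) := h1
          _ = ∑ i ∈ sF, (p * r i) • zCastHom d (b i) := by rw [ha'sum]; exact h2
          _ = ∑ i ∈ sF, ((p * r i : ℕ) : ℝ) • z i := by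
              refine Finset.sum_congr rfl fun i hi => ?_
              rw [Nat.cast_smul_eq_nsmul]
              congr 1
              exact hbz i hi
      set x' : Fin d → ℝ := ∑ i ∈ sF, ((r i : ℝ) / N) • z i with hx'def
      have htpq : (t : ℝ) = (p : ℝ) / (q : ℝ) := by
        rw [Rat.cast_def, hqdef]
        congr 1
        exact_mod_cast hpnum.symm
      have hsmul : ((q * N : ℕ) : ℝ)⁻¹ • (∑ i ∈ sF, ((p * r i : ℕ) : ℝ) • z i)
          = (t : ℝ) • x' := by
        rw [hx'def, Finset.smul_sum, Finset.smul_sum]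
        refine Finset.sum_congr rfl fun i hi => ?_
        rw [smul_smul, smul_smul]
        congr 1
        rw [htpq]
        push_cast
        field_simp
      have hueq : u = (t : ℝ) • x + w₀ := by
        have hpu' : (t : ℝ) • pt = u - δ • v := hpu
        have h3 : u = (t : ℝ) • pt + δ • v := by
          rw [hpu']; abel
        rw [h3, ← hxc, smul_add, hw₀def]
        abel
      have hfinal : u - ((q * N : ℕ) : ℝ)⁻¹ •
          (∑ j : Fin ⌈t * ((q * N : ℕ) : ℚ)⌉₊, zCast (a' (Fin.cast hmm j)))
          = w₀ + (t : ℝ) • (x - x') := by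
        rw [hS1, hS2, hsmul, hueq, smul_sub]
        abel
      have hxx : ‖x - x'‖ ≤ εw * (R - 1) := by
        have hdiff : x - x' = ∑ i ∈ sF, (wgt i - (r i : ℝ) / N) • z i := by
          rw [hxeq, hx'def, ← Finset.sum_sub_distrib]
          exact Finset.sum_congr rfl fun i _ => (sub_smul _ _ _).symm
        rw [hdiff]
        calc ‖∑ i ∈ sF, (wgt i - (r i : ℝ) / N) • z i‖
            ≤ ∑ i ∈ sF, ‖(wgt i - (r i : ℝ) / N) • z i‖ := norm_sum_le _ _
          _ = ∑ i ∈ sF, |wgt i - (r i : ℝ) / N| * ‖z i‖ := by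
              simp [norm_smul, Real.norm_eq_abs]
          _ ≤ ∑ i ∈ sF, εw * ‖z i‖ := by
              refine Finset.sum_le_sum fun i hi => ?_
              refine mul_le_mul_of_nonneg_right ?_ (norm_nonneg _)
              rw [abs_sub_comm]
              exact (hrapp i hi).le
          _ = εw * (R - 1) := by
              rw [← Finset.mul_sum, hRdef]; ring_nf
      have hnorm : ‖(t : ℝ) • (x - x')‖ < ε' := by
        rw [norm_smul, Real.norm_eq_abs, abs_of_pos htR]
        have h4 : (t : ℝ) * ‖x - x'‖ ≤ (t : ℝ) * (εw * (R - 1)) :=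
          mul_le_mul_of_nonneg_left hxx htR.le
        have h5 : (t : ℝ) * (εw * (R - 1)) = ε' * (R - 1) / R := by
          rw [hεwdef]; field_simp
        rw [h5] at h4
        refine lt_of_le_of_lt h4 ?_
        rw [div_lt_iff₀ hRpos]
        nlinarith [hε'pos]
      rw [hfinal]
      refine hball' ?_
      rw [Metric.mem_ball, dist_eq_norm]
      have h6 : w₀ + (t : ℝ) • (x - x') - w₀ = (t : ℝ) • (x - x') := by abel
      rw [h6]
      exact hnorm
  · -- reverse direction
    rintro ⟨n, hn, a, haA, hw⟩
    have htn : (0 : ℚ) < t * n := by positivity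
    obtain ⟨m, hmdef⟩ : ∃ m, m = ⌈t * (n : ℚ)⌉₊ := ⟨_, rfl⟩
    have hmpos : 0 < m := hmdef ▸ Nat.ceil_pos.mpr htn
    have hmR : (0:ℝ) < m := by exact_mod_cast hmpos
    have hnR : (0:ℝ) < n := by exact_mod_cast hn
    have hmge : (t : ℝ) * n ≤ m := by
      have h0 := Nat.le_ceil (t * (n : ℚ))
      rw [← hmdef] at h0
      have h := (Rat.cast_le (K := ℝ)).mpr h0
      push_cast at h
      linarith
    set S : Fin d → ℝ := ∑ j, zCast (a j) with hSdef
    set f : Fin d → ℝ := (n : ℝ)⁻¹ • S with hfdef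
    set avg : Fin d → ℝ := (m : ℝ)⁻¹ • S with havgdef
    have havg_conv : avg ∈ convexHull ℝ (zCast '' ↑A) := by
      rw [havgdef, hSdef, Finset.smul_sum]
      refine (convex_convexHull ℝ _).sum_mem (fun j _ => by positivity) ?_
        (fun j _ => subset_convexHull ℝ _ ⟨a j, Finset.mem_coe.mpr (haA j), rfl⟩)
      rw [Finset.sum_const, Finset.card_univ, Fintype.card_fin, ← hmdef, nsmul_eq_mul]
      field_simp
    have havgC : avg ∈ C := hconvC havg_conv
    have hfavg : f = ((m : ℝ) / n) • avg := by
      rw [hfdef, havgdef, smul_smul]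
      congr 1
      field_simp
    have hsub : (f + ·) '' interior C ⊆ (t : ℝ) • P := by
      rintro _ ⟨w', hw', rfl⟩
      have hw'C : w' ∈ C := interior_subset hw'
      set c₂ : Fin d → ℝ := (t : ℝ)⁻¹ • (((m : ℝ) / n - t) • avg + w') with hc₂def
      have hc₂C : c₂ ∈ C := by
        refine hCsmul _ (by positivity) _ (hCadd _ ?_ _ hw'C)
        refine hCsmul _ ?_ _ havgC
        rw [le_sub_iff_add_le, zero_add, le_div_iff₀ hnR]
        linarith [hmge]
      have heq : f + w' = (t : ℝ) • (avg + c₂) := by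
        have h1 : (t : ℝ) • c₂ = ((m : ℝ) / n - t) • avg + w' := by
          rw [hc₂def, smul_smul, mul_inv_cancel₀ (ne_of_gt htR), one_smul]
        rw [smul_add, h1, hfavg, sub_smul]
        abel
      exact ⟨avg + c₂, by rw [hP]; exact Set.add_mem_add havg_conv hc₂C, heq.symm⟩
    have hopen : IsOpen ((f + ·) '' interior C) :=
      (isOpenMap_add_left f) _ isOpen_interior
    have : u ∈ (f + ·) '' interior C := ⟨u - f, hw, by show f + (u - f) = u; abel⟩
    exact interior_maximal hsub hopen this
end
end

section
/- Let Σ be a fan in ℝ^d and v a nonzero lattice point in the support |Σ|. Then the star subdivision Σ*(v) is again a fan, its support equals |Σ|, and every cone of Σ*(v) is contained in some cone of Σ (i.e., Σ*(v) is a refinement of Σ). -/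
open Set Pointwise

noncomputable section

/-- A rational polyhedral cone: generated by finitely many lattice vectors. -/
def IsRatPolyCone {d : ℕ} (σ : Set (Fin d → ℝ)) : Prop :=
  ∃ (s : ℕ) (v : Fin s → Fin d → ℤ), σ = coneOf fun i => zCast (v i)

/-- A face of a cone `σ`: the zero locus in `σ` of a linear functional that is
nonnegative on `σ`. -/
def IsFaceOf {d : ℕ} (F σ : Set (Fin d → ℝ)) : Prop :=
  ∃ m : Fin d → ℝ, (∀ x ∈ σ, 0 ≤ dotR m x) ∧ F = {x ∈ σ | dotR m x = 0}

/-- A fan: a finite collection of strongly convex rational polyhedral cones, closed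
under taking faces, such that the intersection of any two cones is a face of each. -/
def IsFan {d : ℕ} (𝒮 : Set (Set (Fin d → ℝ))) : Prop :=
  𝒮.Finite ∧
  (∀ σ ∈ 𝒮, IsRatPolyCone σ ∧ σ ∩ (-σ) = {0}) ∧
  (∀ σ ∈ 𝒮, ∀ F, IsFaceOf F σ → F ∈ 𝒮) ∧
  (∀ σ₁ ∈ 𝒮, ∀ σ₂ ∈ 𝒮, IsFaceOf (σ₁ ∩ σ₂) σ₁ ∧ IsFaceOf (σ₁ ∩ σ₂) σ₂)

/-- `Cone(τ, v)`: the cone generated by a cone `τ` together with a vector `v`. -/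
def coneJoin {d : ℕ} (τ : Set (Fin d → ℝ)) (v : Fin d → ℝ) : Set (Fin d → ℝ) :=
  {y | ∃ x ∈ τ, ∃ r : ℝ, 0 ≤ r ∧ y = x + r • v}

/-- The star subdivision `𝒮*(v)` of a fan `𝒮` at `v`: the cones of `𝒮` not
containing `v`, together with the cones `Cone(τ, v)` for `τ ∈ 𝒮` with `v ∉ τ` and
`{v} ∪ τ` contained in some cone of `𝒮`. -/
def starSubdiv {d : ℕ} (𝒮 : Set (Set (Fin d → ℝ))) (v : Fin d → ℝ) :
    Set (Set (Fin d → ℝ)) :=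
  {σ | σ ∈ 𝒮 ∧ v ∉ σ} ∪
  {ρ | ∃ τ ∈ 𝒮, v ∉ τ ∧ (∃ σ ∈ 𝒮, insert v τ ⊆ σ) ∧ ρ = coneJoin τ v}

/-- A smooth cone: generated by a subset of a ℤ-basis of the lattice `ℤ^d`. -/
def IsSmoothCone {d : ℕ} (σ : Set (Fin d → ℝ)) : Prop :=
  ∃ (b : Module.Basis (Fin d) ℤ (Fin d → ℤ)) (t : Finset (Fin d)),
    σ = {x | ∃ c : Fin d → ℝ, (∀ i, 0 ≤ c i) ∧ (∀ i ∉ t, c i = 0) ∧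
      x = ∑ i, c i • zCast (b i)}


/-!
Every cone of `Σ*(v)` lies in a cone of `Σ`, which gives the refinement and strong convexity.
Write `Cone(τ, v)` with `τ ∈ Σ`, `v ∉ τ` and `{v} ∪ τ ⊆ σ ∈ Σ`; a functional cutting `τ` out
of `σ` is positive at `v`. A face of `Cone(τ, v)` is a face of `τ` or spanned by `v` and a face
of `τ`, according as its supporting functional is positive or zero at `v`; conversely faces of
`τ` give faces of `Cone(τ, v)` after correcting the functional on `v`. Since faces of `σ` are
extreme, the decomposition `x + r • v` of a point of `Cone(τ₁, v) ∩ Cone(τ₂, v)` is unique,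
so this intersection is `Cone(τ₁ ∩ τ₂, v)`, and `σ' ∩ Cone(τ, v) = σ' ∩ τ` when `v ∉ σ'`.

For the support, push a point `x` of a cone `σ ∋ v` back along `v` to the last point
`y = x - r • v` of `σ`. Finitely generated cones are closed (Carathéodory), so `-v` can be
separated from `Cone(σ, -y)`, and the separating functional cuts out a face of `σ` through `y`
that avoids `v`.
-/

section

open Matrix

variable {d : ℕ}

lemma dotR_eq_dotProduct (m x : Fin d → ℝ) : dotR m x = m ⬝ᵥ x := rfl

lemma dotR_add (m x y : Fin d → ℝ) : dotR m (x + y) = dotR m x + dotR m y :=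
  dotProduct_add m x y

lemma dotR_add_smul (m x v : Fin d → ℝ) (r : ℝ) :
    dotR m (x + r • v) = dotR m x + r * dotR m v := by
  simp only [dotR_eq_dotProduct, dotProduct_add, dotProduct_smul, smul_eq_mul]

lemma add_smul_dotR (h m x : Fin d → ℝ) (a : ℝ) :
    dotR (h + a • m) x = dotR h x + a * dotR m x := by
  simp only [dotR_eq_dotProduct, add_dotProduct, smul_dotProduct, smul_eq_mul]

lemma dotR_neg (m x : Fin d → ℝ) : dotR m (-x) = -dotR m x := dotProduct_neg m x

lemma exists_dotR_eq (f : (Fin d → ℝ) →ₗ[ℝ] ℝ) : ∃ m, ∀ x, dotR m x = f x :=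
  ⟨fun i => f fun j => if i = j then 1 else 0, fun x => by
    simp only [dotR, f.pi_apply_eq_sum_univ x, smul_eq_mul, mul_comm]⟩

lemma exists_dotR_eqOn_of_dotR_ne_zero {τ : Set (Fin d → ℝ)} {m v : Fin d → ℝ}
    (hm : ∀ x ∈ τ, dotR m x = 0) (hmv : dotR m v ≠ 0) (h : Fin d → ℝ) (t : ℝ) :
    ∃ q, (∀ x ∈ τ, dotR q x = dotR h x) ∧ dotR q v = t :=
  ⟨h + ((t - dotR h v) / dotR m v) • m,
    fun x hx => by rw [add_smul_dotR, hm x hx, mul_zero, add_zero],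
    by rw [add_smul_dotR]; field_simp; ring⟩

section Join

variable {τ : Set (Fin d → ℝ)} {v : Fin d → ℝ}

lemma subset_coneJoin (τ : Set (Fin d → ℝ)) (v : Fin d → ℝ) : τ ⊆ coneJoin τ v :=
  fun x hx => ⟨x, hx, 0, le_rfl, by simp⟩

lemma mem_coneJoin_self (h0 : (0 : Fin d → ℝ) ∈ τ) : v ∈ coneJoin τ v :=
  ⟨0, h0, 1, zero_le_one, by simp⟩

lemma coneJoin_mono {τ₁ τ₂ : Set (Fin d → ℝ)} (h : τ₁ ⊆ τ₂) : coneJoin τ₁ v ⊆ coneJoin τ₂ v := by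
  rintro y ⟨x, hx, r, hr, rfl⟩
  exact ⟨x, h hx, r, hr, rfl⟩

end Join

section Generated

variable {s : ℕ} {w : Fin s → Fin d → ℝ}

lemma zero_mem_coneOf (w : Fin s → Fin d → ℝ) : (0 : Fin d → ℝ) ∈ coneOf w :=
  ⟨0, fun _ => le_rfl, by simp⟩

lemma add_mem_coneOf {x y : Fin d → ℝ} (hx : x ∈ coneOf w) (hy : y ∈ coneOf w) :
    x + y ∈ coneOf w := by
  obtain ⟨c, hc, rfl⟩ := hx
  obtain ⟨c', hc', rfl⟩ := hy
  exact ⟨c + c', fun i => add_nonneg (hc i) (hc' i), by simp [add_smul, Finset.sum_add_distrib]⟩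

lemma smul_mem_coneOf {x : Fin d → ℝ} {r : ℝ} (hr : 0 ≤ r) (hx : x ∈ coneOf w) :
    r • x ∈ coneOf w := by
  obtain ⟨c, hc, rfl⟩ := hx
  exact ⟨r • c, fun i => mul_nonneg hr (hc i), by simp [Finset.smul_sum, smul_smul]⟩

def coneOn (w : Fin s → Fin d → ℝ) (S : Finset (Fin s)) : Set (Fin d → ℝ) :=
  {x | ∃ c : Fin s → ℝ, (∀ i ∈ S, 0 ≤ c i) ∧ x = ∑ i ∈ S, c i • w i}

lemma coneOn_univ (w : Fin s → Fin d → ℝ) : coneOn w Finset.univ = coneOf w := by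
  simp [coneOn, coneOf]

/-- Subtract from the coefficients the largest multiple of the relation that keeps them
nonnegative. -/
lemma exists_mem_coneOn_erase {S : Finset (Fin s)} {x : Fin d → ℝ} (hx : x ∈ coneOn w S)
    {g : Fin s → ℝ} (hg : ∑ i ∈ S, g i • w i = 0) {j : Fin s} (hj : j ∈ S) (hgj : 0 < g j) :
    ∃ i ∈ S, x ∈ coneOn w (S.erase i) := by
  classical
  obtain ⟨c, hc, rfl⟩ := hx
  set P := S.filter (fun i => 0 < g i)
  obtain ⟨i₀, hi₀P, hmin⟩ := P.exists_min_image (fun i => c i / g i)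
    ⟨j, Finset.mem_filter.mpr ⟨hj, hgj⟩⟩
  obtain ⟨hi₀, hgi₀⟩ := Finset.mem_filter.mp hi₀P
  set t := c i₀ / g i₀
  have ht : 0 ≤ t := div_nonneg (hc i₀ hi₀) hgi₀.le
  have hc' : ∀ i ∈ S, 0 ≤ c i - t * g i := by
    intro i hi
    rcases lt_or_ge 0 (g i) with hgi | hgi
    · have := (le_div_iff₀ hgi).mp (hmin i (Finset.mem_filter.mpr ⟨hi, hgi⟩))
      linarith
    · nlinarith [hc i hi]
  have hsum : ∑ i ∈ S, c i • w i = ∑ i ∈ S, (c i - t * g i) • w i := by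
    simp only [sub_smul, Finset.sum_sub_distrib, mul_smul, ← Finset.smul_sum, hg, smul_zero,
      sub_zero]
  refine ⟨i₀, hi₀, fun i => c i - t * g i,
    fun i hi => hc' i (Finset.mem_of_mem_erase hi), ?_⟩
  rw [hsum, Finset.sum_erase]
  simp [t, div_mul_cancel₀ _ hgi₀.ne']

lemma exists_linearIndepOn_of_mem_coneOn {S : Finset (Fin s)} {x : Fin d → ℝ}
    (hx : x ∈ coneOn w S) : ∃ T ⊆ S, LinearIndepOn ℝ w (T : Set (Fin s)) ∧ x ∈ coneOn w T := by
  induction S using Finset.strongInduction with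
  | H S ih =>
    by_cases hS : LinearIndepOn ℝ w (S : Set (Fin s))
    · exact ⟨S, subset_rfl, hS, hx⟩
    obtain ⟨f, hf, j, hj, hfj⟩ := not_linearIndepOn_finset_iff.mp hS
    obtain ⟨g, hg, hgj⟩ : ∃ g : Fin s → ℝ, ∑ i ∈ S, g i • w i = 0 ∧ 0 < g j := by
      rcases hfj.lt_or_gt with hneg | hpos
      · exact ⟨-f, by simp [neg_smul, hf], by simpa using hneg⟩
      · exact ⟨f, hf, hpos⟩
    obtain ⟨i, hi, hxi⟩ := exists_mem_coneOn_erase hx hg hj hgj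
    obtain ⟨T, hTS, hT, hxT⟩ := ih _ (Finset.erase_ssubset hi) hxi
    exact ⟨T, hTS.trans (Finset.erase_subset _ _), hT, hxT⟩

lemma isClosed_coneOn {T : Finset (Fin s)} (hT : LinearIndepOn ℝ w (T : Set (Fin s))) :
    IsClosed (coneOn w T) := by
  classical
  set L := Fintype.linearCombination ℝ (fun i : (T : Set (Fin s)) => w i)
  have hL : Topology.IsClosedEmbedding L := LinearMap.isClosedEmbedding_of_injective
    (LinearMap.ker_eq_bot.mpr (linearIndependent_iff_injective_fintypeLinearCombination.mp hT))
  suffices coneOn w T = L '' Set.Ici 0 from this ▸ hL.isClosedMap _ isClosed_Ici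
  ext x
  constructor
  · rintro ⟨c, hc, rfl⟩
    refine ⟨fun i => c i, fun i => hc i i.2, ?_⟩
    simp only [L, Fintype.linearCombination_apply]
    exact Finset.sum_finset_coe (fun i => c i • w i) T
  · rintro ⟨c, hc, rfl⟩
    refine ⟨fun i => if h : i ∈ T then c ⟨i, h⟩ else 0, fun i hi => by simpa [hi] using hc ⟨i, hi⟩,
      ?_⟩
    simp only [L, Fintype.linearCombination_apply]
    rw [← Finset.sum_finset_coe _ T]
    exact Finset.sum_congr rfl fun i _ => by simp

lemma isClosed_coneOf (w : Fin s → Fin d → ℝ) : IsClosed (coneOf w) := by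
  have : coneOf w = ⋃ T ∈ {T : Finset (Fin s) | LinearIndepOn ℝ w (T : Set (Fin s))},
      coneOn w T := by
    ext x
    simp only [Set.mem_iUnion, Set.mem_ofPred_eq, exists_prop]
    constructor
    · intro hx
      obtain ⟨T, -, hT, hxT⟩ := exists_linearIndepOn_of_mem_coneOn (coneOn_univ w ▸ hx)
      exact ⟨T, hT, hxT⟩
    · rintro ⟨T, -, c, hc, rfl⟩
      refine coneOn_univ w ▸ ⟨fun i => if i ∈ T then c i else 0, fun i _ => ?_, ?_⟩
      · by_cases hi : i ∈ T <;> simp [hi, hc]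
      · simp [ite_smul]
  exact this ▸ (Set.toFinite _).isClosed_biUnion fun T hT => isClosed_coneOn hT

def properConeOf (w : Fin s → Fin d → ℝ) : ProperCone ℝ (Fin d → ℝ) where
  carrier := coneOf w
  add_mem' := add_mem_coneOf
  zero_mem' := zero_mem_coneOf w
  smul_mem' c _ hx := smul_mem_coneOf c.2 hx
  isClosed' := isClosed_coneOf w

lemma exists_dotR_neg_of_notMem_coneOf {u : Fin d → ℝ} (hu : u ∉ coneOf w) :
    ∃ m, (∀ z ∈ coneOf w, 0 ≤ dotR m z) ∧ dotR m u < 0 := by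
  obtain ⟨f, hf, hfu⟩ := (properConeOf w).hyperplane_separation_point hu
  obtain ⟨m, hm⟩ := exists_dotR_eq (f : (Fin d → ℝ) →L[ℝ] ℝ).toLinearMap
  exact ⟨m, fun z hz => (hm z).symm ▸ hf z hz, (hm u).symm ▸ hfu⟩

lemma coneJoin_coneOf (w : Fin s → Fin d → ℝ) (v : Fin d → ℝ) :
    coneJoin (coneOf w) v = coneOf (Fin.snoc w v) := by
  ext y
  constructor
  · rintro ⟨x, ⟨c, hc, rfl⟩, r, hr, rfl⟩
    refine ⟨Fin.snoc c r, Fin.lastCases (by simpa using hr) (by simpa using hc), ?_⟩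
    simp [Fin.sum_univ_castSucc]
  · rintro ⟨c, hc, rfl⟩
    exact ⟨_, ⟨fun i => c i.castSucc, fun i => hc _, rfl⟩, c (Fin.last s), hc _, by
      simp [Fin.sum_univ_castSucc]⟩

lemma exists_isGreatest_sub_smul_mem {v x : Fin d → ℝ} (hv : -v ∉ coneOf w) (hx : x ∈ coneOf w) :
    ∃ r, IsGreatest {r : ℝ | 0 ≤ r ∧ x - r • v ∈ coneOf w} r := by
  obtain ⟨m, hm, hmv⟩ := exists_dotR_neg_of_notMem_coneOf hv
  rw [dotR_neg, neg_lt_zero] at hmv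
  set R := {r : ℝ | 0 ≤ r ∧ x - r • v ∈ coneOf w}
  have hR0 : (0 : ℝ) ∈ R := ⟨le_rfl, by simpa using hx⟩
  have hRbdd : BddAbove R := ⟨dotR m x / dotR m v, fun r hr => by
    have := hm _ hr.2
    rw [sub_eq_add_neg, ← neg_smul, dotR_add_smul] at this
    rw [le_div_iff₀ hmv]
    linarith⟩
  have hRc : IsClosed R := isClosed_Ici.inter ((isClosed_coneOf w).preimage (by fun_prop))
  exact ⟨sSup R, hRc.csSup_mem ⟨0, hR0⟩ hRbdd, fun r hr => le_csSup hRbdd hr⟩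

lemma exists_face_sub_smul_mem {v x : Fin d → ℝ} (hv : -v ∉ coneOf w) (hx : x ∈ coneOf w) :
    ∃ m, (∀ z ∈ coneOf w, 0 ≤ dotR m z) ∧ 0 < dotR m v ∧
      ∃ r : ℝ, 0 ≤ r ∧ x - r • v ∈ coneOf w ∧ dotR m (x - r • v) = 0 := by
  obtain ⟨r, ⟨hr, hy⟩, hmax⟩ := exists_isGreatest_sub_smul_mem hv hx
  set y := x - r • v
  have hvy : -v ∉ coneJoin (coneOf w) (-y) := by
    rintro ⟨b, hb, t, ht, hbt⟩
    rcases ht.eq_or_lt with rfl | htpos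
    · exact hv (by simpa [hbt] using hb)
    have hbt' : b = t • y - v := by linear_combination (norm := module) -hbt
    have hxb : x - (r + t⁻¹) • v = t⁻¹ • b := by
      rw [hbt', smul_sub, smul_smul, inv_mul_cancel₀ htpos.ne', one_smul]
      module
    have := hmax ⟨by positivity, hxb ▸ smul_mem_coneOf (inv_nonneg.mpr ht) hb⟩
    linarith [inv_pos.mpr htpos]
  rw [coneJoin_coneOf] at hvy
  obtain ⟨m, hm, hmv⟩ := exists_dotR_neg_of_notMem_coneOf hvy
  rw [← coneJoin_coneOf] at hm
  have hmσ : ∀ z ∈ coneOf w, 0 ≤ dotR m z := fun z hz => hm z (subset_coneJoin _ _ hz)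
  have hmy : 0 ≤ dotR m (-y) := hm _ (mem_coneJoin_self (zero_mem_coneOf w))
  rw [dotR_neg] at hmv hmy
  exact ⟨m, hmσ, by linarith, r, hr, hy, le_antisymm (by linarith) (hmσ y hy)⟩

end Generated

lemma zCast_ne_zero {u : Fin d → ℤ} (hu : u ≠ 0) : zCast u ≠ 0 :=
  fun h => hu (funext fun i => by simpa [zCast] using congrFun h i)

lemma inter_neg_eq_of_subset {ρ σ : Set (Fin d → ℝ)} (hρσ : ρ ⊆ σ) (h0 : (0 : Fin d → ℝ) ∈ ρ)
    (hσ : σ ∩ -σ = {0}) : ρ ∩ -ρ = {0} :=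
  Set.Subset.antisymm (hσ ▸ Set.inter_subset_inter hρσ (Set.neg_subset_neg.mpr hρσ))
    (Set.singleton_subset_iff.mpr ⟨h0, by simpa using h0⟩)

section RatPoly

variable {σ τ : Set (Fin d → ℝ)} {v : Fin d → ℝ}

lemma IsRatPolyCone.zero_mem (h : IsRatPolyCone σ) : (0 : Fin d → ℝ) ∈ σ := by
  obtain ⟨s, u, rfl⟩ := h
  exact zero_mem_coneOf _

lemma IsRatPolyCone.add_mem (h : IsRatPolyCone σ) {x y : Fin d → ℝ} (hx : x ∈ σ) (hy : y ∈ σ) :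
    x + y ∈ σ := by
  obtain ⟨s, u, rfl⟩ := h
  exact add_mem_coneOf hx hy

lemma IsRatPolyCone.smul_mem (h : IsRatPolyCone σ) {x : Fin d → ℝ} {r : ℝ} (hr : 0 ≤ r)
    (hx : x ∈ σ) : r • x ∈ σ := by
  obtain ⟨s, u, rfl⟩ := h
  exact smul_mem_coneOf hr hx

lemma IsRatPolyCone.coneJoin_subset (h : IsRatPolyCone σ) (hτv : insert v τ ⊆ σ) :
    coneJoin τ v ⊆ σ := by
  rintro _ ⟨x, hx, r, hr, rfl⟩
  rw [Set.insert_subset_iff] at hτv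
  exact h.add_mem (hτv.2 hx) (h.smul_mem hr hτv.1)

lemma IsRatPolyCone.coneJoin_zCast (h : IsRatPolyCone τ) (u : Fin d → ℤ) :
    IsRatPolyCone (coneJoin τ (zCast u)) := by
  obtain ⟨s, w, rfl⟩ := h
  refine ⟨s + 1, Fin.snoc w u, ?_⟩
  rw [coneJoin_coneOf]
  congr 1
  ext i : 1
  refine Fin.lastCases ?_ (fun j => ?_) i <;> simp

end RatPoly

section Face

variable {F σ τ : Set (Fin d → ℝ)} {v : Fin d → ℝ}

lemma IsFaceOf.subset (h : IsFaceOf F σ) : F ⊆ σ := by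
  obtain ⟨m, -, rfl⟩ := h
  exact Set.sep_subset _ _

lemma IsFaceOf.mem_of_add_mem (h : IsFaceOf F σ) {x y : Fin d → ℝ} (hx : x ∈ σ) (hy : y ∈ σ)
    (hxy : x + y ∈ F) : x ∈ F := by
  obtain ⟨m, hm, rfl⟩ := h
  have := hxy.2
  rw [dotR_add] at this
  exact ⟨hx, by linarith [hm x hx, hm y hy]⟩

lemma dotR_nonneg_of_mem_coneJoin {n : Fin d → ℝ} (hn : ∀ x ∈ τ, 0 ≤ dotR n x)
    (hnv : 0 ≤ dotR n v) {y : Fin d → ℝ} (hy : y ∈ coneJoin τ v) : 0 ≤ dotR n y := by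
  obtain ⟨x, hx, r, hr, rfl⟩ := hy
  rw [dotR_add_smul]
  exact add_nonneg (hn x hx) (mul_nonneg hr hnv)

lemma sep_coneJoin_eq_of_pos {n : Fin d → ℝ} (hn : ∀ x ∈ τ, 0 ≤ dotR n x) (hnv : 0 < dotR n v) :
    {y ∈ coneJoin τ v | dotR n y = 0} = {x ∈ τ | dotR n x = 0} := by
  ext y
  constructor
  · rintro ⟨⟨x, hx, r, hr, rfl⟩, hy⟩
    rw [dotR_add_smul] at hy
    obtain rfl : r = 0 := by nlinarith [hn x hx]
    rw [zero_mul, add_zero] at hy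
    simpa using ⟨hx, hy⟩
  · rintro ⟨hy, hy0⟩
    exact ⟨subset_coneJoin τ v hy, hy0⟩

lemma sep_coneJoin_eq_of_eq_zero {n : Fin d → ℝ} (hnv : dotR n v = 0) :
    {y ∈ coneJoin τ v | dotR n y = 0} = coneJoin {x ∈ τ | dotR n x = 0} v := by
  ext y
  constructor
  · rintro ⟨⟨x, hx, r, hr, rfl⟩, hy⟩
    rw [dotR_add_smul, hnv, mul_zero, add_zero] at hy
    exact ⟨x, ⟨hx, hy⟩, r, hr, rfl⟩
  · rintro ⟨x, ⟨hx, hx0⟩, r, hr, rfl⟩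
    exact ⟨⟨x, hx, r, hr, rfl⟩, by rw [dotR_add_smul, hx0, hnv, mul_zero, add_zero]⟩

lemma IsFaceOf.of_coneJoin (hF : IsFaceOf F (coneJoin τ v)) (h0 : (0 : Fin d → ℝ) ∈ τ) :
    ∃ F', IsFaceOf F' τ ∧ (F = F' ∧ v ∉ F ∨ F = coneJoin F' v) := by
  obtain ⟨n, hn, rfl⟩ := hF
  have hnτ : ∀ x ∈ τ, 0 ≤ dotR n x := fun x hx => hn x (subset_coneJoin τ v hx)
  refine ⟨_, ⟨n, hnτ, rfl⟩, ?_⟩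
  rcases (hn v (mem_coneJoin_self h0)).lt_or_eq with hnv | hnv
  · rw [sep_coneJoin_eq_of_pos hnτ hnv]
    exact Or.inl ⟨rfl, fun h => hnv.ne' h.2⟩
  · exact Or.inr (sep_coneJoin_eq_of_eq_zero hnv.symm)

lemma IsFaceOf.isFaceOf_coneJoin (hF : IsFaceOf F τ) {m : Fin d → ℝ}
    (hm : ∀ x ∈ τ, dotR m x = 0) (hmv : dotR m v ≠ 0) : IsFaceOf F (coneJoin τ v) := by
  obtain ⟨h, hh, rfl⟩ := hF
  obtain ⟨q, hqh, hqv⟩ := exists_dotR_eqOn_of_dotR_ne_zero hm hmv h 1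
  have hq : ∀ x ∈ τ, 0 ≤ dotR q x := fun x hx => hqh x hx ▸ hh x hx
  refine ⟨q, fun y => dotR_nonneg_of_mem_coneJoin hq (hqv ▸ zero_le_one), ?_⟩
  rw [sep_coneJoin_eq_of_pos hq (hqv ▸ zero_lt_one)]
  exact Set.sep_ext_iff.mpr fun x hx => by rw [hqh x hx]

lemma IsFaceOf.coneJoin_coneJoin (hF : IsFaceOf F τ) {m : Fin d → ℝ}
    (hm : ∀ x ∈ τ, dotR m x = 0) (hmv : dotR m v ≠ 0) :
    IsFaceOf (coneJoin F v) (coneJoin τ v) := by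
  obtain ⟨h, hh, rfl⟩ := hF
  obtain ⟨q, hqh, hqv⟩ := exists_dotR_eqOn_of_dotR_ne_zero hm hmv h 0
  have hq : ∀ x ∈ τ, 0 ≤ dotR q x := fun x hx => hqh x hx ▸ hh x hx
  refine ⟨q, fun y => dotR_nonneg_of_mem_coneJoin hq hqv.ge, ?_⟩
  rw [sep_coneJoin_eq_of_eq_zero hqv]
  exact congrArg (coneJoin · v) (Set.sep_ext_iff.mpr fun x hx => by rw [hqh x hx])

end Face

lemma Set.Finite.starSubdiv {𝒮 : Set (Set (Fin d → ℝ))} (h : 𝒮.Finite) (v : Fin d → ℝ) :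
    (starSubdiv 𝒮 v).Finite :=
  (h.subset fun _ hσ => hσ.1).union <| (h.image (coneJoin · v)).subset <| by
    rintro _ ⟨τ, hτ, -, -, rfl⟩
    exact ⟨τ, hτ, rfl⟩

namespace IsFan

variable {𝒮 : Set (Set (Fin d → ℝ))} (h𝒮 : IsFan 𝒮) {ρ σ σ' τ : Set (Fin d → ℝ)}
  {v : Fin d → ℝ}
include h𝒮

lemma isRatPolyCone (hσ : σ ∈ 𝒮) : IsRatPolyCone σ := (h𝒮.2.1 σ hσ).1

lemma inter_neg_eq (hσ : σ ∈ 𝒮) : σ ∩ -σ = {0} := (h𝒮.2.1 σ hσ).2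

lemma face_mem {F : Set (Fin d → ℝ)} (hσ : σ ∈ 𝒮) (hF : IsFaceOf F σ) : F ∈ 𝒮 :=
  h𝒮.2.2.1 σ hσ F hF

lemma isFaceOf_inter_left (hσ : σ ∈ 𝒮) (hτ : τ ∈ 𝒮) : IsFaceOf (σ ∩ τ) σ :=
  (h𝒮.2.2.2 σ hσ τ hτ).1

lemma isFaceOf_inter_right (hσ : σ ∈ 𝒮) (hτ : τ ∈ 𝒮) : IsFaceOf (σ ∩ τ) τ :=
  (h𝒮.2.2.2 σ hσ τ hτ).2

lemma exists_dotR_of_insert_subset (hτ : τ ∈ 𝒮) (hvτ : v ∉ τ) (hσ : σ ∈ 𝒮)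
    (hτv : insert v τ ⊆ σ) :
    ∃ m, (∀ z ∈ σ, 0 ≤ dotR m z) ∧ (∀ x ∈ τ, dotR m x = 0) ∧ 0 < dotR m v := by
  rw [Set.insert_subset_iff] at hτv
  obtain ⟨m, hm, hτm⟩ := h𝒮.isFaceOf_inter_right hτ hσ
  rw [Set.inter_eq_left.mpr hτv.2] at hτm
  refine ⟨m, hm, fun x hx => by rw [hτm] at hx; exact hx.2, (hm v hτv.1).lt_of_ne fun h => ?_⟩
  rw [hτm] at hvτ
  exact hvτ ⟨hτv.1, h.symm⟩

lemma mem_of_add_mem {x y : Fin d → ℝ} (hσ : σ ∈ 𝒮) (hσ' : σ' ∈ 𝒮) (hx : x ∈ σ') (hy : y ∈ σ')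
    (hxy : x + y ∈ σ) : x ∈ σ :=
  ((h𝒮.isFaceOf_inter_right hσ hσ').mem_of_add_mem hx hy
    ⟨hxy, (h𝒮.isRatPolyCone hσ').add_mem hx hy⟩).1

lemma exists_superset_of_mem_starSubdiv (hρ : ρ ∈ starSubdiv 𝒮 v) : ∃ σ ∈ 𝒮, ρ ⊆ σ := by
  rcases hρ with ⟨hρ, -⟩ | ⟨τ, -, -, ⟨σ, hσ, hτv⟩, rfl⟩
  · exact ⟨ρ, hρ, subset_rfl⟩
  · exact ⟨σ, hσ, (h𝒮.isRatPolyCone hσ).coneJoin_subset hτv⟩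

lemma isRatPolyCone_of_mem_starSubdiv {u : Fin d → ℤ} (hρ : ρ ∈ starSubdiv 𝒮 (zCast u)) :
    IsRatPolyCone ρ := by
  rcases hρ with ⟨hρ, -⟩ | ⟨τ, hτ, -, -, rfl⟩
  exacts [h𝒮.isRatPolyCone hρ, (h𝒮.isRatPolyCone hτ).coneJoin_zCast u]

lemma face_mem_starSubdiv {F : Set (Fin d → ℝ)} (hρ : ρ ∈ starSubdiv 𝒮 v) (hF : IsFaceOf F ρ) :
    F ∈ starSubdiv 𝒮 v := by
  rcases hρ with ⟨hρ, hvρ⟩ | ⟨τ, hτ, hvτ, ⟨σ, hσ, hτv⟩, rfl⟩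
  · exact Or.inl ⟨h𝒮.face_mem hρ hF, fun h => hvρ (hF.subset h)⟩
  obtain ⟨F', hF', hF | rfl⟩ := hF.of_coneJoin (h𝒮.isRatPolyCone hτ).zero_mem
  · obtain ⟨rfl, hvF⟩ := hF
    exact Or.inl ⟨h𝒮.face_mem hτ hF', hvF⟩
  · exact Or.inr ⟨F', h𝒮.face_mem hτ hF', fun h => hvτ (hF'.subset h),
      ⟨σ, hσ, (Set.insert_subset_insert hF'.subset).trans hτv⟩, rfl⟩

lemma inter_coneJoin_eq (hσ : σ ∈ 𝒮) (hvσ : v ∉ σ) (hσ' : σ' ∈ 𝒮) (hτv : insert v τ ⊆ σ') :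
    σ ∩ coneJoin τ v = σ ∩ τ := by
  rw [Set.insert_subset_iff] at hτv
  refine Set.Subset.antisymm ?_ (Set.inter_subset_inter_right _ (subset_coneJoin τ v))
  rintro _ ⟨hy, x, hx, r, hr, rfl⟩
  have hrv : r • v ∈ σ := h𝒮.mem_of_add_mem hσ hσ'
    ((h𝒮.isRatPolyCone hσ').smul_mem hr hτv.1) (hτv.2 hx) (by rwa [add_comm])
  obtain rfl : r = 0 := by
    by_contra hr0
    refine hvσ ?_
    simpa [smul_smul, inv_mul_cancel₀ hr0] using (h𝒮.isRatPolyCone hσ).smul_mem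
      (inv_nonneg.mpr hr) hrv
  rw [zero_smul, add_zero] at hy ⊢
  exact ⟨hy, hx⟩

lemma le_of_add_smul_eq {τ' : Set (Fin d → ℝ)} (hτ : τ ∈ 𝒮) (hvτ : v ∉ τ) (hσ : σ ∈ 𝒮)
    (hτv : insert v τ ⊆ σ) (hσ' : σ' ∈ 𝒮) (hτ'v : insert v τ' ⊆ σ') {x x' : Fin d → ℝ}
    {r r' : ℝ} (hx : x ∈ τ) (hr : 0 ≤ r) (hx' : x' ∈ τ') (hr' : 0 ≤ r')
    (h : x' + r' • v = x + r • v) : r' ≤ r := by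
  obtain ⟨m, hm, hmτ, hmv⟩ := h𝒮.exists_dotR_of_insert_subset hτ hvτ hσ hτv
  rw [Set.insert_subset_iff] at hτ'v
  have hx'σ : x' ∈ σ := h𝒮.mem_of_add_mem hσ hσ' (hτ'v.2 hx')
    ((h𝒮.isRatPolyCone hσ').smul_mem hr' hτ'v.1)
    (h ▸ (h𝒮.isRatPolyCone hσ).coneJoin_subset hτv ⟨x, hx, r, hr, rfl⟩)
  have hm' := congrArg (dotR m) h
  rw [dotR_add_smul, dotR_add_smul, hmτ x hx, zero_add] at hm'
  exact le_of_mul_le_mul_right (by linarith [hm x' hx'σ]) hmv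

lemma coneJoin_inter_coneJoin {τ₁ τ₂ σ₁ σ₂ : Set (Fin d → ℝ)}
    (hτ₁ : τ₁ ∈ 𝒮) (hvτ₁ : v ∉ τ₁) (hσ₁ : σ₁ ∈ 𝒮) (hτv₁ : insert v τ₁ ⊆ σ₁)
    (hτ₂ : τ₂ ∈ 𝒮) (hvτ₂ : v ∉ τ₂) (hσ₂ : σ₂ ∈ 𝒮) (hτv₂ : insert v τ₂ ⊆ σ₂) :
    coneJoin τ₁ v ∩ coneJoin τ₂ v = coneJoin (τ₁ ∩ τ₂) v := by
  refine Set.Subset.antisymm ?_ (Set.subset_inter (coneJoin_mono Set.inter_subset_left)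
    (coneJoin_mono Set.inter_subset_right))
  rintro _ ⟨⟨x₁, hx₁, r₁, hr₁, rfl⟩, x₂, hx₂, r₂, hr₂, h⟩
  obtain rfl : r₁ = r₂ := le_antisymm
    (h𝒮.le_of_add_smul_eq hτ₂ hvτ₂ hσ₂ hτv₂ hσ₁ hτv₁ hx₂ hr₂ hx₁ hr₁ h)
    (h𝒮.le_of_add_smul_eq hτ₁ hvτ₁ hσ₁ hτv₁ hσ₂ hτv₂ hx₁ hr₁ hx₂ hr₂ h.symm)
  obtain rfl := add_right_cancel h
  exact ⟨x₁, ⟨hx₁, hx₂⟩, r₁, hr₁, rfl⟩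

lemma isFaceOf_inter_of_mem_starSubdiv {ρ₁ ρ₂ : Set (Fin d → ℝ)} (hρ₁ : ρ₁ ∈ starSubdiv 𝒮 v)
    (hρ₂ : ρ₂ ∈ starSubdiv 𝒮 v) : IsFaceOf (ρ₁ ∩ ρ₂) ρ₁ := by
  rcases hρ₁ with ⟨hρ₁, hvρ₁⟩ | ⟨τ₁, hτ₁, hvτ₁, ⟨σ₁, hσ₁, hτv₁⟩, rfl⟩ <;>
    rcases hρ₂ with ⟨hρ₂, hvρ₂⟩ | ⟨τ₂, hτ₂, hvτ₂, ⟨σ₂, hσ₂, hτv₂⟩, rfl⟩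
  · exact h𝒮.isFaceOf_inter_left hρ₁ hρ₂
  · rw [h𝒮.inter_coneJoin_eq hρ₁ hvρ₁ hσ₂ hτv₂]
    exact h𝒮.isFaceOf_inter_left hρ₁ hτ₂
  · obtain ⟨m, -, hmτ, hmv⟩ := h𝒮.exists_dotR_of_insert_subset hτ₁ hvτ₁ hσ₁ hτv₁
    rw [Set.inter_comm, h𝒮.inter_coneJoin_eq hρ₂ hvρ₂ hσ₁ hτv₁, Set.inter_comm]
    exact (h𝒮.isFaceOf_inter_left hτ₁ hρ₂).isFaceOf_coneJoin hmτ hmv.ne'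
  · obtain ⟨m, -, hmτ, hmv⟩ := h𝒮.exists_dotR_of_insert_subset hτ₁ hvτ₁ hσ₁ hτv₁
    rw [h𝒮.coneJoin_inter_coneJoin hτ₁ hvτ₁ hσ₁ hτv₁ hτ₂ hvτ₂ hσ₂ hτv₂]
    exact (h𝒮.isFaceOf_inter_left hτ₁ hτ₂).coneJoin_coneJoin hmτ hmv.ne'

lemma sUnion_starSubdiv (hv : v ≠ 0) : ⋃₀ starSubdiv 𝒮 v = ⋃₀ 𝒮 := by
  refine Set.Subset.antisymm (Set.sUnion_subset fun ρ hρ => ?_) ?_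
  · obtain ⟨σ, hσ, hρσ⟩ := h𝒮.exists_superset_of_mem_starSubdiv hρ
    exact hρσ.trans (Set.subset_sUnion_of_mem hσ)
  rintro x ⟨σ, hσ, hx⟩
  by_cases hvσ : v ∈ σ
  swap
  · exact ⟨σ, Or.inl ⟨hσ, hvσ⟩, hx⟩
  have hnv : -v ∉ σ := fun h => by
    have : v ∈ σ ∩ -σ := ⟨hvσ, by simpa using h⟩
    exact hv (by simpa [h𝒮.inter_neg_eq hσ] using this)
  obtain ⟨s, w, rfl⟩ := h𝒮.isRatPolyCone hσ
  obtain ⟨m, hm, hmv, r, hr, hy, hmy⟩ := exists_face_sub_smul_mem hnv hx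
  refine ⟨coneJoin {z ∈ coneOf _ | dotR m z = 0} v,
    Or.inr ⟨_, h𝒮.face_mem hσ ⟨m, hm, rfl⟩, fun h => hmv.ne' h.2,
      ⟨_, hσ, Set.insert_subset hvσ (Set.sep_subset _ _)⟩, rfl⟩,
    x - r • v, ⟨hy, hmy⟩, r, hr, by abel⟩

theorem starSubdiv (u : Fin d → ℤ) : IsFan (starSubdiv 𝒮 (zCast u)) := by
  refine ⟨h𝒮.1.starSubdiv _, fun ρ hρ => ?_, fun ρ hρ F hF => h𝒮.face_mem_starSubdiv hρ hF,
    fun ρ₁ hρ₁ ρ₂ hρ₂ => ⟨h𝒮.isFaceOf_inter_of_mem_starSubdiv hρ₁ hρ₂,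
      Set.inter_comm ρ₂ ρ₁ ▸ h𝒮.isFaceOf_inter_of_mem_starSubdiv hρ₂ hρ₁⟩⟩
  have hρ' := h𝒮.isRatPolyCone_of_mem_starSubdiv hρ
  obtain ⟨σ, hσ, hρσ⟩ := h𝒮.exists_superset_of_mem_starSubdiv hρ
  exact ⟨hρ', inter_neg_eq_of_subset hρσ hρ'.zero_mem (h𝒮.inter_neg_eq hσ)⟩

end IsFan

end

theorem starSubdiv_isFan_refinement_general
    {d : ℕ} (𝒮 : Set (Set (Fin d → ℝ))) (h𝒮 : IsFan 𝒮)
    (v : Fin d → ℤ) (hv : v ≠ 0) :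
    IsFan (starSubdiv 𝒮 (zCast v)) ∧
    ⋃₀ starSubdiv 𝒮 (zCast v) = ⋃₀ 𝒮 ∧
    ∀ ρ ∈ starSubdiv 𝒮 (zCast v), ∃ σ ∈ 𝒮, ρ ⊆ σ :=
  ⟨h𝒮.starSubdiv v, h𝒮.sUnion_starSubdiv (zCast_ne_zero hv),
    fun _ => h𝒮.exists_superset_of_mem_starSubdiv⟩

/-- the star subdivision of a fan `𝒮` at a nonzero lattice point `v`
of its support is again a fan, has the same support, and refines `𝒮` (every cone of
the subdivision is contained in some cone of `𝒮`). -/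
theorem starSubdiv_isFan_refinement
    {d : ℕ} (𝒮 : Set (Set (Fin d → ℝ))) (h𝒮 : IsFan 𝒮)
    (v : Fin d → ℤ) (hv : v ≠ 0) (hvsupp : zCast v ∈ ⋃₀ 𝒮) :
    IsFan (starSubdiv 𝒮 (zCast v)) ∧
    ⋃₀ starSubdiv 𝒮 (zCast v) = ⋃₀ 𝒮 ∧
    ∀ ρ ∈ starSubdiv 𝒮 (zCast v), ∃ σ ∈ 𝒮, ρ ⊆ σ :=
  starSubdiv_isFan_refinement_general 𝒮 h𝒮 v hv
end
end
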